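/- Fix an integer k ≥ 1 and define integers p_1, …, p_k by the polynomial identity t^k − Σ_{j=1}^k p_j t^{k−j} = Π_{j=1}^k (t − j). Then the sequence b_n := S(n+1, k) (n ≥ 0), where S denotes the Stirling numbers of the second kind, is the impulse response sequence of the recurrence with coefficients p_1, …, p_k; that is, b_0 = b_1 = ⋯ = b_{k−2} = 0, b_{k−1} = 1, and b_n = Σ_{j=1}^k p_j b_{n−j} for all n ≥ k. -/

import Mathlib

/-!
Let `E` be the shift `f ↦ (n ↦ f (n + 1))` on integer sequences. The recurrence
`S(n+1, k) = k S(n, k) + S(n, k-1)` says that `E - k` sends `S(·, k)` to `S(·, k-1)`, so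
`∏_{j=1}^k (E - j)` sends `S(·, k)` to `S(·, 0)`, which vanishes from index `1` on.
By the hypothesis on `p` this operator is `E^k - ∑ p_j E^(k-j)`, and evaluating at `n + 1 - k`
gives the recurrence for `b n = S(n+1, k)`; the initial values are `S(n, k) = 0` for `n < k` and
`S(k, k) = 1`.
-/

/-- Stirling numbers of the second kind: `stirling n k` counts the partitions of a
set of `n` labelled objects into `k` nonempty unlabelled subsets. -/
def stirling : ℕ → ℕ → ℕ
  | 0, 0 => 1
  | 0, _ + 1 => 0
  | _ + 1, 0 => 0
  | n + 1, k + 1 => (k + 1) * stirling n (k + 1) + stirling n k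

open Polynomial Finset

lemma stirling_eq_stirlingSecond : ∀ n k, stirling n k = Nat.stirlingSecond n k
  | 0, 0 => rfl
  | 0, _ + 1 => rfl
  | _ + 1, 0 => rfl
  | n + 1, k + 1 => by
    rw [stirling, Nat.stirlingSecond_succ_succ, stirling_eq_stirlingSecond n (k + 1),
      stirling_eq_stirlingSecond n k]

section SequenceShift

variable {R : Type*} [CommRing R]

def seqShift : Module.End R (ℕ → R) where
  toFun f n := f (n + 1)
  map_add' _ _ := rfl
  map_smul' _ _ := rfl

lemma seqShift_pow_apply (i : ℕ) (f : ℕ → R) (n : ℕ) : (seqShift ^ i) f n = f (n + i) := by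
  induction i generalizing f with
  | zero => rfl
  | succ i ih => rw [pow_succ, Module.End.mul_apply, ih]; rfl

lemma aeval_seqShift_X_sub_C_apply (a : R) (f : ℕ → R) (n : ℕ) :
    aeval seqShift (X - C a) f n = f (n + 1) - a * f n := by
  simp only [map_sub, aeval_X, aeval_C, LinearMap.sub_apply, Pi.sub_apply,
    Module.algebraMap_end_apply, Pi.smul_apply, smul_eq_mul]
  rfl

lemma aeval_seqShift_X_pow_sub_sum_apply (k : ℕ) (p : ℕ → R) (f : ℕ → R) (n : ℕ) :
    aeval seqShift (X ^ k - ∑ j ∈ Icc 1 k, C (p j) * X ^ (k - j)) f n =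
      f (n + k) - ∑ j ∈ Icc 1 k, p j * f (n + (k - j)) := by
  simp only [map_sub, map_sum, map_pow, map_mul, aeval_X, aeval_C, LinearMap.sub_apply,
    Pi.sub_apply, LinearMap.coe_sum, Finset.sum_apply, Module.End.mul_apply,
    Module.algebraMap_end_apply, Pi.smul_apply, smul_eq_mul, seqShift_pow_apply]

end SequenceShift

lemma aeval_seqShift_X_sub_C_stirlingSecond (k : ℕ) :
    aeval seqShift (X - C ((k + 1 : ℕ) : ℤ)) (fun n => (Nat.stirlingSecond n (k + 1) : ℤ)) =
      fun n => (Nat.stirlingSecond n k : ℤ) := by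
  funext n
  rw [aeval_seqShift_X_sub_C_apply, Nat.stirlingSecond_succ_succ]
  push_cast
  ring

lemma aeval_seqShift_prod_stirlingSecond (k : ℕ) :
    aeval seqShift (∏ j ∈ Icc 1 k, (X - C (j : ℤ))) (fun n => (Nat.stirlingSecond n k : ℤ)) =
      fun n => (Nat.stirlingSecond n 0 : ℤ) := by
  induction k with
  | zero => simp
  | succ k ih =>
    rw [prod_Icc_succ_top (by omega), map_mul, Module.End.mul_apply,
      aeval_seqShift_X_sub_C_stirlingSecond, ih]

/-- With integers `p 1, …, p k` defined by
`t^k - ∑_{j=1}^k p j t^(k-j) = ∏_{j=1}^k (t - j)`, the sequence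
`b n = S(n+1, k)` is the impulse response sequence of the recurrence with
coefficients `p 1, …, p k`. -/
theorem statement15 (k : ℕ) (hk : 1 ≤ k) (p : ℕ → ℤ)
    (hchar : (Polynomial.X : Polynomial ℤ) ^ k -
        ∑ j ∈ Finset.Icc 1 k, Polynomial.C (p j) * Polynomial.X ^ (k - j) =
      ∏ j ∈ Finset.Icc 1 k, (Polynomial.X - Polynomial.C (j : ℤ)))
    (b : ℕ → ℤ) (hb : ∀ n, b n = (stirling (n + 1) k : ℤ)) :
    (∀ i, i < k - 1 → b i = 0) ∧ b (k - 1) = 1 ∧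
      ∀ n, k ≤ n → b n = ∑ j ∈ Finset.Icc 1 k, p j * b (n - j) := by
  simp only [stirling_eq_stirlingSecond] at hb
  refine ⟨fun i hi => ?_, ?_, fun n hn => ?_⟩
  · rw [hb, Nat.stirlingSecond_eq_zero_of_lt (by omega), Nat.cast_zero]
  · rw [hb, Nat.sub_add_cancel hk, Nat.stirlingSecond_self, Nat.cast_one]
  · obtain ⟨m, rfl⟩ : ∃ m, n = m + k := ⟨n - k, by omega⟩
    have h := congrArg
      (fun q => aeval seqShift q (fun n => (Nat.stirlingSecond n k : ℤ)) (m + 1)) hchar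
    simp only [aeval_seqShift_X_pow_sub_sum_apply, aeval_seqShift_prod_stirlingSecond,
      Nat.stirlingSecond_succ_zero, Nat.cast_zero, sub_eq_zero] at h
    rw [hb, add_right_comm, h]
    refine sum_congr rfl fun j hj => ?_
    have hjk : m + 1 + (k - j) = m + k - j + 1 := by have := (mem_Icc.mp hj).2; omega
    rw [hb, hjk]
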